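/- arXiv:math/0406480 — 4 statements merged into one kernel-verified Lean document; each statement's English description precedes it below -/
import Mathlib

section
/- The group generated by a, b, c subject to a³ = b³ = c³ = 1 and abc = 1 is isomorphic to ℤ/3 ⋉ ℤ², where the generator of ℤ/3 acts on ℤ² by a rotation of order 3 (i.e., via a matrix of order 3 in SL₂(ℤ)). -/
/-!
The matrix `ρ = !![0, -1; 1, -1]` satisfies `ρ² + ρ + 1 = 0`, so in `ℤ² ⋊ ℤ/3` every element
`(v, t)`, with `t` the generator of `ℤ/3`, has cube `(v + ρv + ρ²v, t³) = 1`. Hence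
`a, b, c ↦ (e₁, t), (e₁ + e₂, t), (0, t)` defines a homomorphism out of the presented group.
Conversely, there `b = a⁻¹c⁻¹`, so `a³ = c³ = (ca)³ = 1`, and these relations make `x = ac⁻¹` and
`y = cxc⁻¹` commute, with `cyc⁻¹ = x⁻¹y⁻¹`. So `e₁ ↦ x`, `e₂ ↦ y`, `t ↦ c` defines a
homomorphism back, and both composites fix the generators.
-/

/-- Relations of the group `⟨a,b,c | a³=b³=c³=1, abc=1⟩`. -/
def rels2 : Set (FreeGroup (Fin 3)) :=
  (Set.range fun i : Fin 3 => FreeGroup.of i ^ 3) ∪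
    {FreeGroup.of 0 * FreeGroup.of 1 * FreeGroup.of 2}

open Multiplicative
open scoped Matrix

section ZModHom

variable {n : ℕ} [NeZero n] {M : Type*} [Monoid M]

theorem ofAdd_eq_ofAdd_one_pow_val (k : ZMod n) :
    ofAdd k = ofAdd (1 : ZMod n) ^ k.val := by
  rw [← ofAdd_nsmul, nsmul_one, ZMod.natCast_zmod_val]

theorem MonoidHom.ext_mzmod ⦃f g : Multiplicative (ZMod n) →* M⦄
    (h : f (ofAdd 1) = g (ofAdd 1)) : f = g :=
  MonoidHom.ext fun k => by
    rw [← ofAdd_toAdd k, ofAdd_eq_ofAdd_one_pow_val, map_pow, map_pow, h]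

def zmodPowHom (x : M) (hx : x ^ n = 1) : Multiplicative (ZMod n) →* M where
  toFun k := x ^ k.toAdd.val
  map_one' := by simp
  map_mul' k l := by
    simp only [toAdd_mul, ZMod.val_add, ← pow_eq_pow_mod _ hx, pow_add]

theorem zmodPowHom_ofAdd (x : M) (hx : x ^ n = 1) (k : ZMod n) :
    zmodPowHom x hx (ofAdd k) = x ^ k.val := rfl

theorem zmodPowHom_ofAdd_one (x : M) (hx : x ^ n = 1) :
    zmodPowHom x hx (ofAdd 1) = x := by
  rw [zmodPowHom_ofAdd, ZMod.val_one_eq_one_mod, ← pow_eq_pow_mod _ hx, pow_one]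

end ZModHom

namespace Matrix

variable {ι R : Type*} [Fintype ι] [DecidableEq ι] [Semiring R]

def mulVecMulAut : (Matrix ι ι R)ˣ →* MulAut (Multiplicative (ι → R)) where
  toFun U :=
    { toFun v := ofAdd ((U : Matrix ι ι R) *ᵥ v.toAdd)
      invFun v := ofAdd (↑U⁻¹ *ᵥ v.toAdd)
      left_inv v := by simp [mulVec_mulVec]
      right_inv v := by simp [mulVec_mulVec]
      map_mul' v w := mulVec_add _ _ _ }
  map_one' := by ext; simp
  map_mul' U V := MulEquiv.ext fun v => congrArg ofAdd (mulVec_mulVec _ _ _).symm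

theorem mulVecMulAut_apply (U : (Matrix ι ι R)ˣ) (v : ι → R) :
    mulVecMulAut U (ofAdd v) = ofAdd ((U : Matrix ι ι R) *ᵥ v) := rfl

end Matrix

section Zsq

variable {G : Type*} [Group G]

def zsqLift (x y : G) (hxy : Commute x y) : Multiplicative (Fin 2 → ℤ) →* G :=
  MonoidHom.mk' (fun v => x ^ v.toAdd 0 * y ^ v.toAdd 1) fun v w => by
    simp only [toAdd_mul, Pi.add_apply, zpow_add, mul_assoc]
    rw [(hxy.zpow_zpow _ _).left_comm]

theorem zsqLift_apply (x y : G) (hxy : Commute x y) (v : Fin 2 → ℤ) :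
    zsqLift x y hxy (ofAdd v) = x ^ v 0 * y ^ v 1 := rfl

theorem zsqLift_e1 (x y : G) (hxy : Commute x y) : zsqLift x y hxy (ofAdd ![1, 0]) = x := by
  simp [zsqLift_apply]

theorem zsqLift_e2 (x y : G) (hxy : Commute x y) : zsqLift x y hxy (ofAdd ![0, 1]) = y := by
  simp [zsqLift_apply]

theorem MonoidHom.ext_zsq ⦃f g : Multiplicative (Fin 2 → ℤ) →* G⦄
    (h₀ : f (ofAdd ![1, 0]) = g (ofAdd ![1, 0])) (h₁ : f (ofAdd ![0, 1]) = g (ofAdd ![0, 1])) :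
    f = g :=
  MonoidHom.ext fun v => by
    have hv : v = ofAdd ![1, 0] ^ v.toAdd 0 * ofAdd ![0, 1] ^ v.toAdd 1 := by
      rw [← ofAdd_zsmul, ← ofAdd_zsmul, ← ofAdd_add]
      ext i; fin_cases i <;> simp
    rw [hv, map_mul, map_mul, map_zpow, map_zpow, map_zpow, map_zpow, h₀, h₁]

end Zsq

namespace SemidirectProduct

variable {n : ℕ} [NeZero n] {N H : Type*} [Group N] [Group H]
  {φ : Multiplicative (ZMod n) →* MulAut N}

def liftZMod (f : N →* H) (c : H) (hc : c ^ n = 1)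
    (hf : ∀ x, f (φ (ofAdd 1) x) = c * f x * c⁻¹) : N ⋊[φ] Multiplicative (ZMod n) →* H :=
  lift f (zmodPowHom c hc) fun g => MonoidHom.ext fun x => by
    rw [← ofAdd_toAdd g, ofAdd_eq_ofAdd_one_pow_val, map_pow, map_pow, zmodPowHom_ofAdd_one]
    induction g.toAdd.val generalizing x with
    | zero => simp
    | succ m ih =>
      simp only [MulEquiv.coe_toMonoidHom, MonoidHom.coe_comp, Function.comp_apply,
        MulAut.conj_apply] at ih ⊢
      rw [pow_succ, MulAut.mul_apply, ih, hf, pow_succ, mul_inv_rev]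
      group

theorem liftZMod_inl (f : N →* H) (c : H) (hc : c ^ n = 1)
    (hf : ∀ x, f (φ (ofAdd 1) x) = c * f x * c⁻¹) (x : N) :
    liftZMod f c hc hf (inl x) = f x :=
  lift_inl _ _ _ _

theorem liftZMod_inr_ofAdd_one (f : N →* H) (c : H) (hc : c ^ n = 1)
    (hf : ∀ x, f (φ (ofAdd 1) x) = c * f x * c⁻¹) :
    liftZMod f c hc hf (inr (ofAdd 1)) = c := by
  rw [liftZMod, lift_inr, zmodPowHom_ofAdd_one]

end SemidirectProduct

section CubeRelations

variable {G : Type*} [Group G] {a c : G}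

theorem mul_self_eq_inv_of_pow_three {x : G} (hx : x ^ 3 = 1) : x * x = x⁻¹ :=
  eq_inv_of_mul_eq_one_left (by rw [← pow_three', hx])

theorem commute_mul_inv_conj (ha : a ^ 3 = 1) (hc : c ^ 3 = 1) (hca : (c * a) ^ 3 = 1) :
    Commute (a * c⁻¹) (c * (a * c⁻¹) * c⁻¹) := by
  have hc' := mul_self_eq_inv_of_pow_three hc
  calc a * c⁻¹ * (c * (a * c⁻¹) * c⁻¹) = a * a * (c * c)⁻¹ := by simp [mul_assoc]
    _ = a⁻¹ * c := by rw [mul_self_eq_inv_of_pow_three ha, hc', inv_inv]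
    _ = a⁻¹ * (c * c)⁻¹ := by rw [hc', inv_inv]
    _ = (c * a)⁻¹ * c⁻¹ := by simp [mul_assoc]
    _ = c * a * (c * a) * c⁻¹ := by rw [mul_self_eq_inv_of_pow_three hca]
    _ = c * a * (c * c)⁻¹ * a * c⁻¹ := by rw [hc', inv_inv]; simp [mul_assoc]
    _ = c * (a * c⁻¹) * c⁻¹ * (a * c⁻¹) := by simp [mul_assoc]

theorem conj_conj_mul_inv (hc : c ^ 3 = 1) (hca : (c * a) ^ 3 = 1) :
    c * (c * (a * c⁻¹) * c⁻¹) * c⁻¹ = (a * c⁻¹)⁻¹ * (c * (a * c⁻¹) * c⁻¹)⁻¹ := by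
  have hc' := mul_self_eq_inv_of_pow_three hc
  calc c * (c * (a * c⁻¹) * c⁻¹) * c⁻¹ = c * c * a * (c * c * c)⁻¹ := by simp [mul_assoc]
    _ = c * c * a := by rw [← pow_three', hc, inv_one, mul_one]
    _ = c * (c * a * (c * a))⁻¹ := by rw [mul_self_eq_inv_of_pow_three hca, inv_inv, mul_assoc]
    _ = c * a⁻¹ * c⁻¹ * a⁻¹ * c⁻¹ := by simp [mul_assoc]
    _ = c * a⁻¹ * (c * c) * a⁻¹ * c⁻¹ := by rw [hc']
    _ = (a * c⁻¹)⁻¹ * (c * (a * c⁻¹) * c⁻¹)⁻¹ := by simp [mul_assoc]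

end CubeRelations

/-- Multiplication by `ζ = e^{2πi/3}` on `ℤ[ζ]`, in the basis `1, ζ`. -/
def rot : Matrix (Fin 2) (Fin 2) ℤ := !![0, -1; 1, -1]

theorem rot_sq_add_rot_add_one : rot ^ 2 + rot + 1 = 0 := by
  ext i j; fin_cases i <;> fin_cases j <;> simp [rot, sq]

theorem rot_pow_three : rot ^ 3 = 1 := by
  calc rot ^ 3 = (rot - 1) * (rot ^ 2 + rot + 1) + 1 := by noncomm_ring
    _ = 1 := by rw [rot_sq_add_rot_add_one, mul_zero, zero_add]

theorem det_rot : rot.det = 1 := by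
  simp [rot, Matrix.det_fin_two_of]

theorem rot_ne_one : rot ≠ 1 := fun h => by
  simpa [rot] using congrFun₂ h 0 0

theorem rot_mulVec_e1 : rot *ᵥ ![1, 0] = ![0, 1] := by
  ext i; fin_cases i <;> simp [rot]

theorem rot_mulVec_e2 : rot *ᵥ ![0, 1] = -![1, 0] + -![0, 1] := by
  ext i; fin_cases i <;> simp [rot]

theorem rot_mulVec_e1_add_e2 : rot *ᵥ ![1, 1] = -![1, 0] := by
  ext i; fin_cases i <;> simp [rot]

def rotAction : Multiplicative (ZMod 3) →* MulAut (Multiplicative (Fin 2 → ℤ)) :=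
  Matrix.mulVecMulAut.comp
    (zmodPowHom (Units.ofPowEqOne rot 3 rot_pow_three three_ne_zero) (Units.pow_ofPowEqOne _ _))

theorem rotAction_ofAdd_one (v : Fin 2 → ℤ) :
    rotAction (ofAdd 1) (ofAdd v) = ofAdd (rot *ᵥ v) := by
  rw [rotAction, MonoidHom.comp_apply, zmodPowHom_ofAdd_one, Matrix.mulVecMulAut_apply,
    Units.val_ofPowEqOne]

/-- The wallpaper group `p3`. -/
abbrev P3 := Multiplicative (Fin 2 → ℤ) ⋊[rotAction] Multiplicative (ZMod 3)

namespace P3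

open SemidirectProduct

def t : P3 := inr (ofAdd 1)

theorem t_pow_three : t ^ 3 = 1 := by
  rw [t, ← map_pow]
  rfl

theorem t_conj_inl (w : Fin 2 → ℤ) : t * inl (ofAdd w) * t⁻¹ = inl (ofAdd (rot *ᵥ w)) := by
  rw [t, ← map_inv, ← inl_aut, rotAction_ofAdd_one]

theorem inl_mul_t_pow_three (w : Fin 2 → ℤ) : (inl (ofAdd w) * t) ^ 3 = 1 := by
  calc (inl (ofAdd w) * t) ^ 3
        = inl (ofAdd w) * (t * inl (ofAdd w) * t⁻¹) * (t * (t * inl (ofAdd w) * t⁻¹) * t⁻¹) *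
            t ^ 3 := by
          simp [pow_three', mul_assoc]
    _ = inl (ofAdd ((rot ^ 2 + rot + 1) *ᵥ w)) := by
          simp only [t_conj_inl, t_pow_three, mul_one, ← map_mul, ← ofAdd_add, Matrix.add_mulVec,
            Matrix.mulVec_mulVec, sq, Matrix.one_mulVec]
          abel_nf
    _ = 1 := by rw [rot_sq_add_rot_add_one, Matrix.zero_mulVec, ofAdd_zero, map_one]

end P3

namespace Triangle333

abbrev Δ := PresentedGroup rels2

def a : Δ := .of 0
def b : Δ := .of 1
def c : Δ := .of 2

theorem of_pow_three (i : Fin 3) : (PresentedGroup.of i : Δ) ^ 3 = 1 :=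
  PresentedGroup.one_of_mem (Or.inl ⟨i, rfl⟩)

theorem a_pow_three : a ^ 3 = 1 := of_pow_three 0

theorem c_pow_three : c ^ 3 = 1 := of_pow_three 2

theorem a_mul_b_mul_c : a * b * c = 1 :=
  PresentedGroup.one_of_mem (Or.inr rfl)

theorem b_eq : b = a⁻¹ * c⁻¹ := by
  calc b = a⁻¹ * (a * b * c) * c⁻¹ := by group
    _ = a⁻¹ * c⁻¹ := by rw [a_mul_b_mul_c, mul_one]

theorem c_mul_a_pow_three : (c * a) ^ 3 = 1 := by
  rw [← inv_inj, ← inv_pow, mul_inv_rev, ← b_eq, inv_one]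
  exact of_pow_three 1

def X : Δ := a * c⁻¹
def Y : Δ := c * X * c⁻¹

theorem commute_X_Y : Commute X Y :=
  commute_mul_inv_conj a_pow_three c_pow_three c_mul_a_pow_three

theorem c_conj_Y : c * Y * c⁻¹ = X⁻¹ * Y⁻¹ :=
  conj_conj_mul_inv c_pow_three c_mul_a_pow_three

open SemidirectProduct P3

/-- As affine maps of `ℤ[ζ]` these images are `z ↦ ζz + 1`, `z ↦ ζz + 1 + ζ` and `z ↦ ζz`. -/
theorem toP3_rels : ∀ r ∈ rels2,
    FreeGroup.lift ![inl (ofAdd ![1, 0]) * t, inl (ofAdd ![1, 1]) * t, t] r = 1 := by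
  rintro r (⟨i, rfl⟩ | rfl)
  · rw [map_pow, FreeGroup.lift_apply_of]
    fin_cases i
    · exact inl_mul_t_pow_three _
    · exact inl_mul_t_pow_three _
    · exact t_pow_three
  · simp only [map_mul, FreeGroup.lift_apply_of]
    calc inl (ofAdd ![1, 0]) * t * (inl (ofAdd ![1, 1]) * t) * t
        = inl (ofAdd ![1, 0]) * (t * inl (ofAdd ![1, 1]) * t⁻¹) * t ^ 3 := by
          simp [pow_three', mul_assoc]
      _ = 1 := by rw [t_conj_inl, rot_mulVec_e1_add_e2, t_pow_three, mul_one, ← map_mul,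
          ← ofAdd_add, add_neg_cancel, ofAdd_zero, map_one]

def toP3 : Δ →* P3 := PresentedGroup.toGroup toP3_rels

theorem toP3_a : toP3 a = inl (ofAdd ![1, 0]) * t := PresentedGroup.toGroup.of toP3_rels

theorem toP3_c : toP3 c = t := PresentedGroup.toGroup.of toP3_rels

theorem toP3_X : toP3 X = inl (ofAdd ![1, 0]) := by
  rw [X, map_mul, map_inv, toP3_a, toP3_c, mul_inv_cancel_right]

theorem toP3_Y : toP3 Y = inl (ofAdd ![0, 1]) := by
  rw [Y, map_mul, map_mul, map_inv, toP3_X, toP3_c, t_conj_inl, rot_mulVec_e1]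

def latticeHom : Multiplicative (Fin 2 → ℤ) →* Δ := zsqLift X Y commute_X_Y

theorem latticeHom_rotAction (v : Multiplicative (Fin 2 → ℤ)) :
    latticeHom (rotAction (ofAdd 1) v) = c * latticeHom v * c⁻¹ := by
  have h : latticeHom.comp (rotAction (ofAdd 1)).toMonoidHom =
      (MulAut.conj c).toMonoidHom.comp latticeHom := by
    refine MonoidHom.ext_zsq ?_ ?_ <;>
      simp only [MonoidHom.comp_apply, MulEquiv.coe_toMonoidHom, MulAut.conj_apply,
        rotAction_ofAdd_one, latticeHom, zsqLift_e1, zsqLift_e2]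
    · rw [rot_mulVec_e1, zsqLift_e2, Y]
    · rw [rot_mulVec_e2, ofAdd_add, ofAdd_neg, ofAdd_neg, map_mul, map_inv, map_inv, zsqLift_e1,
        zsqLift_e2, c_conj_Y]
  exact DFunLike.congr_fun h v

def ofP3 : P3 →* Δ := liftZMod latticeHom c c_pow_three latticeHom_rotAction

theorem ofP3_toP3 : ofP3.comp toP3 = MonoidHom.id Δ := by
  have ha : ofP3 (toP3 a) = a := by
    rw [toP3_a, map_mul, ofP3, liftZMod_inl, t, liftZMod_inr_ofAdd_one, latticeHom,
      zsqLift_e1, X, inv_mul_cancel_right]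
  have hc : ofP3 (toP3 c) = c := by rw [toP3_c, ofP3, t, liftZMod_inr_ofAdd_one]
  refine PresentedGroup.ext fun i => ?_
  fin_cases i
  · exact ha
  · change ofP3 (toP3 b) = b
    rw [b_eq, map_mul, map_mul, map_inv, map_inv, map_inv, map_inv, ha, hc]
  · exact hc

theorem toP3_ofP3 : toP3.comp ofP3 = MonoidHom.id P3 := by
  refine hom_ext (MonoidHom.ext_zsq ?_ ?_) (MonoidHom.ext_mzmod ?_) <;>
    simp only [MonoidHom.comp_apply, MonoidHom.id_apply]
  · rw [ofP3, liftZMod_inl, latticeHom, zsqLift_e1, toP3_X]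
  · rw [ofP3, liftZMod_inl, latticeHom, zsqLift_e2, toP3_Y]
  · rw [ofP3, liftZMod_inr_ofAdd_one, toP3_c, t]

end Triangle333

/-- `⟨a,b,c | a³=b³=c³=1, abc=1⟩ ≅ ℤ/3 ⋉ ℤ²`, where the generator of `ℤ/3`
acts on `ℤ²` by a rotation of order 3, i.e. via a matrix of order 3 in `SL₂(ℤ)`. -/
theorem stmt2 :
    ∃ M : Matrix (Fin 2) (Fin 2) ℤ, M.det = 1 ∧ M ^ 3 = 1 ∧ M ≠ 1 ∧
      ∃ φ : Multiplicative (ZMod 3) →* MulAut (Multiplicative (Fin 2 → ℤ)),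
        (∀ v : Fin 2 → ℤ,
          φ (Multiplicative.ofAdd 1) (Multiplicative.ofAdd v) =
            Multiplicative.ofAdd (M.mulVec v)) ∧
        Nonempty (PresentedGroup rels2 ≃*
          Multiplicative (Fin 2 → ℤ) ⋊[φ] Multiplicative (ZMod 3)) :=
  ⟨rot, det_rot, rot_pow_three, rot_ne_one, rotAction, rotAction_ofAdd_one,
    ⟨MonoidHom.toMulEquiv Triangle333.toP3 Triangle333.ofP3 Triangle333.ofP3_toP3
      Triangle333.toP3_ofP3⟩⟩
end

section
/- Let a, b, d ∈ GL_n(ℂ) act irreducibly on ℂⁿ. If z ∈ gl_n satisfies Tr([x,d]·ab·z) = Tr(d·[x,a]·b·z) = Tr(da·[x,b]·z) = 0 for all x ∈ gl_n, then z is a scalar multiple of b⁻¹a⁻¹d⁻¹. -/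
/-!
Writing each trace as `Tr(x · [p, q])` by cyclicity, nondegeneracy of the trace form turns the
hypotheses into `[d, abz] = [a, bzd] = [b, zda] = 0`. Then `u = bzda = abzd` commutes with `a`, `b`
and `d`, so by Schur's lemma `u = c • 1`, i.e. `z = c • b⁻¹a⁻¹d⁻¹`.
-/

open Matrix

namespace Matrix

variable {ι R : Type*} [Fintype ι] [DecidableEq ι]

theorem eq_zero_of_forall_trace_mul_eq_zero [Semiring R] {m : Matrix ι ι R}
    (h : ∀ x : Matrix ι ι R, (x * m).trace = 0) : m = 0 := by
  ext i j
  simpa [trace_single_mul] using h (single j i 1)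

theorem commute_of_forall_trace_commutator_mul_eq_zero [CommRing R] {p q : Matrix ι ι R}
    (h : ∀ x : Matrix ι ι R, ((x * p - p * x) * q).trace = 0) : Commute p q := by
  refine sub_eq_zero.mp (eq_zero_of_forall_trace_mul_eq_zero fun x => ?_)
  rw [← h x, mul_sub, sub_mul, trace_sub, trace_sub, ← mul_assoc, ← mul_assoc,
    trace_mul_cycle x q p]

/-- Schur's lemma for a set of matrices acting irreducibly. -/
theorem exists_eq_smul_one_of_forall_commute [Field R] [IsAlgClosed R] (S : Set (Matrix ι ι R))
    (hirr : ∀ W : Submodule R (ι → R), (∀ m ∈ S, ∀ v ∈ W, m *ᵥ v ∈ W) → W = ⊥ ∨ W = ⊤)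
    {u : Matrix ι ι R} (hu : ∀ m ∈ S, Commute m u) : ∃ c : R, u = c • 1 := by
  cases isEmpty_or_nonempty ι
  · exact ⟨0, Subsingleton.elim _ _⟩
  obtain ⟨c, hc⟩ := Module.End.exists_eigenvalue (toLin' u)
  have hW : Module.End.eigenspace (toLin' u) c = ⊤ := by
    refine (hirr _ fun m hm => ?_).resolve_left hc
    exact fun v hv =>
      Module.End.mapsTo_genEigenspace_of_comm ((hu m hm).symm.map toLinAlgEquiv') c 1 hv
  refine ⟨c, toLin'.injective (LinearMap.ext fun v => ?_)⟩
  rw [Module.End.mem_eigenspace_iff.mp (hW ▸ Submodule.mem_top : v ∈ _)]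
  simp

theorem eq_smul_inv_of_mul_eq_smul_one [CommRing R] {a b d z : Matrix ι ι R}
    (ha : IsUnit a) (hb : IsUnit b) (hd : IsUnit d) {c : R} (h : b * z * d * a = c • 1) :
    z = c • (b⁻¹ * a⁻¹ * d⁻¹) := by
  rw [isUnit_iff_isUnit_det] at ha hb hd
  calc z = b⁻¹ * (b * z * d * a) * a⁻¹ * d⁻¹ := by
        simp [mul_assoc, nonsing_inv_mul_cancel_left _ _ hb, mul_nonsing_inv_cancel_right _ _ ha,
          mul_nonsing_inv_cancel_right _ _ hd]
    _ = c • (b⁻¹ * a⁻¹ * d⁻¹) := by simp [h]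

end Matrix

/-- if `a, b, d ∈ GL_n(ℂ)` act irreducibly on `ℂⁿ` and `z` satisfies
`Tr([x,d]·ab·z) = Tr(d·[x,a]·b·z) = Tr(da·[x,b]·z) = 0` for all `x`, then `z` is a
scalar multiple of `b⁻¹a⁻¹d⁻¹`. -/
theorem stmt6 (n : ℕ) (a b d : Matrix (Fin n) (Fin n) ℂ)
    (ha : IsUnit a) (hb : IsUnit b) (hd : IsUnit d)
    (hirr : ∀ W : Submodule ℂ (Fin n → ℂ),
      (∀ v ∈ W, a.mulVec v ∈ W) → (∀ v ∈ W, b.mulVec v ∈ W) →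
      (∀ v ∈ W, d.mulVec v ∈ W) → W = ⊥ ∨ W = ⊤)
    (z : Matrix (Fin n) (Fin n) ℂ)
    (h1 : ∀ x : Matrix (Fin n) (Fin n) ℂ, ((x * d - d * x) * (a * b) * z).trace = 0)
    (h2 : ∀ x : Matrix (Fin n) (Fin n) ℂ, (d * (x * a - a * x) * b * z).trace = 0)
    (h3 : ∀ x : Matrix (Fin n) (Fin n) ℂ, ((d * a) * (x * b - b * x) * z).trace = 0) :
    ∃ c : ℂ, z = c • (b⁻¹ * a⁻¹ * d⁻¹) := by
  have hd_comm : Commute d (a * b * z) :=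
    commute_of_forall_trace_commutator_mul_eq_zero fun x => by rw [← mul_assoc, h1]
  have ha_comm : Commute a (b * z * d) :=
    commute_of_forall_trace_commutator_mul_eq_zero fun x => by
      rw [← h2 x, mul_assoc d, mul_assoc d, trace_mul_comm d]; simp only [mul_assoc]
  have hb_comm : Commute b (z * d * a) :=
    commute_of_forall_trace_commutator_mul_eq_zero fun x => by
      rw [← h3 x, mul_assoc (d * a), trace_mul_comm (d * a)]; simp only [mul_assoc]
  have hu : ∀ m ∈ ({a, b, d} : Set _), Commute m (b * z * d * a) := by
    simp only [Set.mem_insert_iff, Set.mem_singleton_iff, forall_eq_or_imp, forall_eq]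
    refine ⟨ha_comm.mul_right (.refl a), ?_, ?_⟩
    · simpa only [mul_assoc] using (Commute.refl b).mul_right hb_comm
    · rw [← ha_comm.eq, ← mul_assoc, ← mul_assoc]
      exact hd_comm.mul_right (.refl d)
  obtain ⟨c, hc⟩ := exists_eq_smul_one_of_forall_commute _
    (fun W hW => hirr W (hW a (by simp)) (hW b (by simp)) (hW d (by simp))) hu
  exact ⟨c, eq_smul_inv_of_mul_eq_smul_one ha hb hd hc⟩
end

section
/- Let q ∈ ℂ* and let B(q) be the ℂ-algebra generated by T₁,…,T_m with relations T_i^{d_i} = 1 (i = 1,…,m) and T₁⋯T_m = q, where (d₁,…,d_m) = (2,2,2,2). Then B(q) is isomorphic to the crossed product ℂ[ℤ/2] ⋉ A_{q²}, where A_Q is the algebra generated by X^{±1}, P^{±1} with PX = QXP and the generator s of ℤ/2 acts by s X s⁻¹ = X⁻¹, s P s⁻¹ = P⁻¹. -/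
open FreeAlgebra

/-- Relations of `B(q)`: generators `T₁, T₂, T₃, T₄` with `T_i² = 1` and `T₁T₂T₃T₄ = q`. -/
inductive BRel (q : ℂ) : FreeAlgebra ℂ (Fin 4) → FreeAlgebra ℂ (Fin 4) → Prop
  | sq (i : Fin 4) : BRel q (ι ℂ i * ι ℂ i) 1
  | prodRel : BRel q (ι ℂ 0 * ι ℂ 1 * ι ℂ 2 * ι ℂ 3) (algebraMap ℂ (FreeAlgebra ℂ (Fin 4)) q)

/-- The algebra `B(q)`. -/
abbrev Balg (q : ℂ) := RingQuot (BRel q)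

/-- Relations of the crossed product `ℂ[ℤ/2] ⋉ A_Q`: the generators (in order) are
`X, X⁻¹, P, P⁻¹, s`, with `A_Q` generated by `X^{±1}, P^{±1}` with `PX = QXP`, the
generator `s` of `ℤ/2` satisfying `s² = 1` and acting by `sXs⁻¹ = X⁻¹`, `sPs⁻¹ = P⁻¹`. -/
inductive CRel (Q : ℂ) : FreeAlgebra ℂ (Fin 5) → FreeAlgebra ℂ (Fin 5) → Prop
  | XXinv : CRel Q (ι ℂ 0 * ι ℂ 1) 1
  | XinvX : CRel Q (ι ℂ 1 * ι ℂ 0) 1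
  | PPinv : CRel Q (ι ℂ 2 * ι ℂ 3) 1
  | PinvP : CRel Q (ι ℂ 3 * ι ℂ 2) 1
  | comm : CRel Q (ι ℂ 2 * ι ℂ 0) (Q • (ι ℂ 0 * ι ℂ 2))
  | sX : CRel Q (ι ℂ 4 * ι ℂ 0 * ι ℂ 4) (ι ℂ 1)
  | sP : CRel Q (ι ℂ 4 * ι ℂ 2 * ι ℂ 4) (ι ℂ 3)
  | ss : CRel Q (ι ℂ 4 * ι ℂ 4) 1

/-- The crossed product `ℂ[ℤ/2] ⋉ A_Q` (presented by `X^{±1}, P^{±1}, s` as above). -/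
abbrev CrossedZ2 (Q : ℂ) := RingQuot (CRel Q)

namespace Stmt12Aux

noncomputable def t (q : ℂ) (i : Fin 4) : Balg q := RingQuot.mkAlgHom ℂ (BRel q) (ι ℂ i)
noncomputable def c (Q : ℂ) (i : Fin 5) : CrossedZ2 Q := RingQuot.mkAlgHom ℂ (CRel Q) (ι ℂ i)

lemma lcancel {A : Type*} [Semiring A] {u : A} (h : u * u = 1) (a : A) :
    u * (u * a) = a := by rw [← mul_assoc, h, one_mul]

variable (q Q : ℂ)

lemma t_sq (i : Fin 4) : t q i * t q i = 1 := by
  simpa [t] using RingQuot.mkAlgHom_rel ℂ (BRel.sq (q := q) i)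

lemma t_cancel (i : Fin 4) (a : Balg q) : t q i * (t q i * a) = a :=
  lcancel (t_sq q i) a

lemma t_prod : t q 0 * (t q 1 * (t q 2 * t q 3)) = q • 1 := by
  have := RingQuot.mkAlgHom_rel ℂ (BRel.prodRel (q := q))
  simpa [t, mul_assoc, Algebra.algebraMap_eq_smul_one] using this

lemma c_xx' : c Q 0 * c Q 1 = 1 := by
  simpa [c] using RingQuot.mkAlgHom_rel ℂ (CRel.XXinv (Q := Q))
lemma c_x'x : c Q 1 * c Q 0 = 1 := by
  simpa [c] using RingQuot.mkAlgHom_rel ℂ (CRel.XinvX (Q := Q))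
lemma c_pp' : c Q 2 * c Q 3 = 1 := by
  simpa [c] using RingQuot.mkAlgHom_rel ℂ (CRel.PPinv (Q := Q))
lemma c_p'p : c Q 3 * c Q 2 = 1 := by
  simpa [c] using RingQuot.mkAlgHom_rel ℂ (CRel.PinvP (Q := Q))
lemma c_ss : c Q 4 * c Q 4 = 1 := by
  simpa [c] using RingQuot.mkAlgHom_rel ℂ (CRel.ss (Q := Q))
lemma c_comm : c Q 2 * c Q 0 = Q • (c Q 0 * c Q 2) := by
  simpa [c] using RingQuot.mkAlgHom_rel ℂ (CRel.comm (Q := Q))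
lemma c_sxs : c Q 4 * (c Q 0 * c Q 4) = c Q 1 := by
  simpa [c, mul_assoc] using RingQuot.mkAlgHom_rel ℂ (CRel.sX (Q := Q))
lemma c_sps : c Q 4 * (c Q 2 * c Q 4) = c Q 3 := by
  simpa [c, mul_assoc] using RingQuot.mkAlgHom_rel ℂ (CRel.sP (Q := Q))

-- trailing-variable (right-assoc) versions, usable as rewrite rules
lemma mcancel {A : Type*} [Semiring A] {u v : A} (h : u * v = 1) (a : A) :
    u * (v * a) = a := by rw [← mul_assoc, h, one_mul]

lemma r_xx' (a : CrossedZ2 Q) : c Q 0 * (c Q 1 * a) = a := mcancel (c_xx' Q) a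
lemma r_x'x (a : CrossedZ2 Q) : c Q 1 * (c Q 0 * a) = a := mcancel (c_x'x Q) a
lemma r_pp' (a : CrossedZ2 Q) : c Q 2 * (c Q 3 * a) = a := mcancel (c_pp' Q) a
lemma r_p'p (a : CrossedZ2 Q) : c Q 3 * (c Q 2 * a) = a := mcancel (c_p'p Q) a
lemma r_ss (a : CrossedZ2 Q) : c Q 4 * (c Q 4 * a) = a := mcancel (c_ss Q) a
lemma r_sxs (a : CrossedZ2 Q) : c Q 4 * (c Q 0 * (c Q 4 * a)) = c Q 1 * a := by
  rw [← mul_assoc, ← mul_assoc, mul_assoc (c Q 4), c_sxs]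
lemma r_sps (a : CrossedZ2 Q) : c Q 4 * (c Q 2 * (c Q 4 * a)) = c Q 3 * a := by
  rw [← mul_assoc, ← mul_assoc, mul_assoc (c Q 4), c_sps]

lemma c_sp's : c Q 4 * (c Q 3 * c Q 4) = c Q 2 := by
  have h := congrArg (fun z => c Q 4 * (z * c Q 4)) (c_sps Q)
  rw [← h]
  simp only [mul_assoc, r_ss]
  rw [c_ss, mul_one]

lemma c_sx's : c Q 4 * (c Q 1 * c Q 4) = c Q 0 := by
  have h := congrArg (fun z => c Q 4 * (z * c Q 4)) (c_sxs Q)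
  rw [← h]
  simp only [mul_assoc, r_ss]
  rw [c_ss, mul_one]

lemma r_sp's (a : CrossedZ2 Q) : c Q 4 * (c Q 3 * (c Q 4 * a)) = c Q 2 * a := by
  rw [← mul_assoc, ← mul_assoc, mul_assoc (c Q 4), c_sp's]

-- key mixed move: s * (p' * (x * s)) = p * x'
lemma c_sp'xs : c Q 4 * (c Q 3 * (c Q 0 * c Q 4)) = c Q 2 * c Q 1 := by
  have : c Q 0 * c Q 4 = c Q 4 * (c Q 4 * (c Q 0 * c Q 4)) := (r_ss Q _).symm
  rw [this, c_sxs, r_sp's]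

lemma r_comm (a : CrossedZ2 Q) : c Q 2 * (c Q 0 * a) = Q • (c Q 0 * (c Q 2 * a)) := by
  rw [← mul_assoc, c_comm, smul_mul_assoc, mul_assoc]


-- derived relations in Balg
lemma ht3 : t q 3 = q • (t q 2 * (t q 1 * t q 0)) := by
  have h := congrArg (fun z => t q 2 * (t q 1 * (t q 0 * z))) (t_prod q)
  simp only [t_cancel, mul_smul_comm, mul_one] at h
  exact h

lemma hww (a : Balg q) :
    (q ^ 2) • (t q 2 * (t q 1 * t q 0) * (t q 2 * (t q 1 * t q 0) * a)) = a := by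
  have h1 : t q 3 * t q 3 = 1 := t_sq q 3
  rw [ht3, smul_mul_assoc, mul_smul_comm, smul_smul, ← pow_two] at h1
  rw [← mul_assoc, ← smul_mul_assoc, h1, one_mul]

lemma b_comm :
    t q 1 * t q 2 * (t q 0 * t q 1) = (q ^ 2) • (t q 0 * t q 1 * (t q 1 * t q 2)) := by
  have rhs_eq : (q ^ 2) • (t q 0 * t q 1 * (t q 1 * t q 2)) = (q ^ 2) • (t q 0 * t q 2) := by
    simp only [mul_assoc, t_cancel]
  rw [rhs_eq]
  conv_lhs => rw [mul_assoc, ← hww q (t q 0 * t q 1)]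
  simp only [mul_assoc, mul_smul_comm, t_cancel, t_sq, mul_one]

-- generator images
noncomputable def fg (q : ℂ) : Fin 4 → CrossedZ2 (q ^ 2)
  | ⟨0, _⟩ => c (q ^ 2) 0 * c (q ^ 2) 4
  | ⟨1, _⟩ => c (q ^ 2) 4
  | ⟨2, _⟩ => c (q ^ 2) 4 * c (q ^ 2) 2
  | ⟨3, _⟩ => q • (c (q ^ 2) 3 * (c (q ^ 2) 0 * c (q ^ 2) 4))

noncomputable def gg (q : ℂ) : Fin 5 → Balg q
  | ⟨0, _⟩ => t q 0 * t q 1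
  | ⟨1, _⟩ => t q 1 * t q 0
  | ⟨2, _⟩ => t q 1 * t q 2
  | ⟨3, _⟩ => t q 2 * t q 1
  | ⟨4, _⟩ => t q 1

noncomputable def F : FreeAlgebra ℂ (Fin 4) →ₐ[ℂ] CrossedZ2 (q ^ 2) := lift ℂ (fg q)
noncomputable def G : FreeAlgebra ℂ (Fin 5) →ₐ[ℂ] Balg q := lift ℂ (gg q)

lemma hF : ∀ ⦃x y⦄, BRel q x y → F q x = F q y := by
  intro x y h
  induction h with
  | sq i =>
    fin_cases i <;>
      simp only [F, map_mul, map_one, lift_ι_apply, fg]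
    · -- (x*s)*(x*s) = 1
      simp only [mul_assoc, c_sxs, c_xx']
    · exact c_ss _
    · -- (s*p)*(s*p) = 1
      simp only [mul_assoc, r_sps, c_p'p]
    · -- t4 image squared
      simp only [smul_mul_assoc, mul_smul_comm, smul_smul, mul_assoc]
      rw [c_sp'xs, ← pow_two, ← mul_smul_comm, ← r_comm, c_xx', mul_one, c_p'p]
  | prodRel =>
    simp only [F, map_mul, AlgHom.commutes, lift_ι_apply, fg]
    simp only [mul_assoc, mul_smul_comm, r_ss, r_pp', c_sxs, c_xx', mul_one]
    rw [Algebra.algebraMap_eq_smul_one]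

lemma hG : ∀ ⦃x y⦄, CRel (q ^ 2) x y → G q x = G q y := by
  intro x y h
  induction h with
  | XXinv => simp only [G, map_mul, map_one, lift_ι_apply, gg, mul_assoc, t_cancel, t_sq]
  | XinvX => simp only [G, map_mul, map_one, lift_ι_apply, gg, mul_assoc, t_cancel, t_sq]
  | PPinv => simp only [G, map_mul, map_one, lift_ι_apply, gg, mul_assoc, t_cancel, t_sq]
  | PinvP => simp only [G, map_mul, map_one, lift_ι_apply, gg, mul_assoc, t_cancel, t_sq]
  | comm =>
    simp only [G, map_mul, map_smul, lift_ι_apply, gg]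
    exact b_comm q
  | sX =>
    simp only [G, map_mul, lift_ι_apply, gg]
    simp only [mul_assoc, t_cancel, t_sq, mul_one]
  | sP =>
    simp only [G, map_mul, lift_ι_apply, gg]
    simp only [mul_assoc, t_cancel, t_sq, mul_one]
  | ss => simp only [G, map_mul, map_one, lift_ι_apply, gg, t_sq]

noncomputable def fHom : Balg q →ₐ[ℂ] CrossedZ2 (q ^ 2) :=
  RingQuot.liftAlgHom ℂ ⟨F q, hF q⟩

noncomputable def gHom : CrossedZ2 (q ^ 2) →ₐ[ℂ] Balg q :=
  RingQuot.liftAlgHom ℂ ⟨G q, hG q⟩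

lemma fHom_t (i : Fin 4) : fHom q (t q i) = fg q i := by
  rw [fHom, t, RingQuot.liftAlgHom_mkAlgHom_apply, F, lift_ι_apply]

lemma gHom_c (i : Fin 5) : gHom q (c (q ^ 2) i) = gg q i := by
  rw [gHom, c, RingQuot.liftAlgHom_mkAlgHom_apply, G, lift_ι_apply]

lemma hom_ext {n : ℕ} {r : FreeAlgebra ℂ (Fin n) → FreeAlgebra ℂ (Fin n) → Prop} {B : Type*}
    [Semiring B] [Algebra ℂ B] {α β : RingQuot r →ₐ[ℂ] B}
    (h : ∀ i, α (RingQuot.mkAlgHom ℂ r (ι ℂ i)) = β (RingQuot.mkAlgHom ℂ r (ι ℂ i))) :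
    α = β := by
  have h2 : α.comp (RingQuot.mkAlgHom ℂ r) = β.comp (RingQuot.mkAlgHom ℂ r) :=
    FreeAlgebra.hom_ext (funext fun i => h i)
  refine AlgHom.ext fun x => ?_
  obtain ⟨y, rfl⟩ := RingQuot.mkAlgHom_surjective ℂ r x
  exact DFunLike.congr_fun h2 y

lemma comp_fg : (fHom q).comp (gHom q) = AlgHom.id ℂ (CrossedZ2 (q ^ 2)) := by
  apply hom_ext
  intro i
  fin_cases i
  · show fHom q (gHom q (c (q ^ 2) 0)) = c (q ^ 2) 0
    rw [gHom_c]
    show fHom q (t q 0 * t q 1) = _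
    rw [map_mul, fHom_t, fHom_t]
    show c (q ^ 2) 0 * c (q ^ 2) 4 * c (q ^ 2) 4 = _
    rw [mul_assoc, c_ss, mul_one]
  · show fHom q (gHom q (c (q ^ 2) 1)) = c (q ^ 2) 1
    rw [gHom_c]
    show fHom q (t q 1 * t q 0) = _
    rw [map_mul, fHom_t, fHom_t]
    show c (q ^ 2) 4 * (c (q ^ 2) 0 * c (q ^ 2) 4) = _
    exact c_sxs _
  · show fHom q (gHom q (c (q ^ 2) 2)) = c (q ^ 2) 2
    rw [gHom_c]
    show fHom q (t q 1 * t q 2) = _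
    rw [map_mul, fHom_t, fHom_t]
    show c (q ^ 2) 4 * (c (q ^ 2) 4 * c (q ^ 2) 2) = _
    exact r_ss _ _
  · show fHom q (gHom q (c (q ^ 2) 3)) = c (q ^ 2) 3
    rw [gHom_c]
    show fHom q (t q 2 * t q 1) = _
    rw [map_mul, fHom_t, fHom_t]
    show c (q ^ 2) 4 * c (q ^ 2) 2 * c (q ^ 2) 4 = _
    rw [mul_assoc]; exact c_sps _
  · show fHom q (gHom q (c (q ^ 2) 4)) = c (q ^ 2) 4
    rw [gHom_c]
    show fHom q (t q 1) = _
    rw [fHom_t]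
    rfl

lemma comp_gf : (gHom q).comp (fHom q) = AlgHom.id ℂ (Balg q) := by
  apply hom_ext
  intro i
  fin_cases i
  · show gHom q (fHom q (t q 0)) = t q 0
    rw [fHom_t]
    show gHom q (c (q ^ 2) 0 * c (q ^ 2) 4) = _
    rw [map_mul, gHom_c, gHom_c]
    show t q 0 * t q 1 * t q 1 = _
    rw [mul_assoc, t_sq, mul_one]
  · show gHom q (fHom q (t q 1)) = t q 1
    rw [fHom_t]
    show gHom q (c (q ^ 2) 4) = _
    rw [gHom_c]
    rfl
  · show gHom q (fHom q (t q 2)) = t q 2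
    rw [fHom_t]
    show gHom q (c (q ^ 2) 4 * c (q ^ 2) 2) = _
    rw [map_mul, gHom_c, gHom_c]
    show t q 1 * (t q 1 * t q 2) = _
    exact t_cancel q 1 _
  · show gHom q (fHom q (t q 3)) = t q 3
    rw [fHom_t]
    show gHom q (q • (c (q ^ 2) 3 * (c (q ^ 2) 0 * c (q ^ 2) 4))) = _
    rw [map_smul, map_mul, map_mul, gHom_c, gHom_c, gHom_c]
    show q • (t q 2 * t q 1 * (t q 0 * t q 1 * t q 1)) = _
    rw [mul_assoc (t q 0), t_sq, mul_one, mul_assoc]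
    exact (ht3 q).symm

end Stmt12Aux

/-- for `(d₁,…,d₄) = (2,2,2,2)`, the algebra
`B(q) = ⟨T₁,…,T₄ | T_i² = 1, T₁T₂T₃T₄ = q⟩` is isomorphic to the crossed product
`ℂ[ℤ/2] ⋉ A_{q²}`, where `A_Q` is generated by `X^{±1}, P^{±1}` with `PX = QXP` and the
generator `s` of `ℤ/2` acts by `sXs⁻¹ = X⁻¹`, `sPs⁻¹ = P⁻¹`
(via `X = T₁T₂`, `P = T₂T₃`, `s = T₄`). -/
theorem stmt12 (q : ℂ) : Nonempty (Balg q ≃ₐ[ℂ] CrossedZ2 (q ^ 2)) :=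
  ⟨AlgEquiv.ofAlgHom (Stmt12Aux.fHom q) (Stmt12Aux.gHom q)
    (Stmt12Aux.comp_fg q) (Stmt12Aux.comp_gf q)⟩
end

section
/- Let q be a root of unity such that q^ℓ has order N, and let t = (t_{kj}) be parameters such that one cannot choose nonnegative integers p_{kj} with ∑_j p_{kj} = p < ℓN for all k and ∏_{k,j} u_{kj}^{p_{kj}} = q^p (where u_{kj} = e^{2πij/d_k} t_{kj}). Then any finite-dimensional representation of the algebra H(t,q) has dimension ≥ ℓN. -/
/-!
Taking determinants in `T₁ ⋯ T_m = q` gives `∏ₖ det Tₖ = q ^ p`. Each `Tₖ` is annihilated by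
`∏ⱼ (X - u_{kj})`, so every eigenvalue of `Tₖ` is some `u_{kj}`; counting eigenvalues with
multiplicity, `det Tₖ = ∏ⱼ u_{kj} ^ p_{kj}` with `∑ⱼ p_{kj} = p`. If `p < lN` this contradicts
the genericity assumption on the `u_{kj}`.
-/

open Polynomial

theorem Polynomial.aeval_prod_X_sub_C_eq_prod_ofFn {R A : Type*} [CommRing R] [Ring A]
    [Algebra R A] {d : ℕ} (a : A) (c : Fin d → R) :
    aeval a (∏ j, (X - C (c j))) = (List.ofFn fun j => a - c j • (1 : A)).prod := by
  induction d with
  | zero => simp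
  | succ d ih =>
    rw [Fin.prod_univ_succ, map_mul, ih, List.ofFn_succ, List.prod_cons]
    simp [Algebra.algebraMap_eq_smul_one]

theorem Matrix.eval_eq_zero_of_isRoot_charpoly {n K : Type*} [Fintype n] [DecidableEq n]
    [Nonempty n] [Field K] {A : Matrix n n K} {f : K[X]} (hf : aeval A f = 0) {μ : K}
    (hμ : A.charpoly.IsRoot μ) : f.eval μ = 0 := by
  have := spectrum.subset_polynomial_aeval A f ⟨μ, mem_spectrum_of_isRoot_charpoly hμ, rfl⟩
  rwa [hf, spectrum.zero_eq, Set.mem_singleton_iff] at this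

theorem Matrix.exists_det_eq_prod_pow {n K ι : Type*} [Fintype n] [DecidableEq n]
    [Field K] [IsAlgClosed K] [Fintype ι] (A : Matrix n n K) (c : ι → K)
    (hA : ∀ μ ∈ A.charpoly.roots, ∃ i, c i = μ) :
    ∃ P : ι → ℕ, ∑ i, P i = Fintype.card n ∧ A.det = ∏ i, c i ^ P i := by
  classical
  set t := A.charpoly.roots.attach.map fun μ => (hA μ.1 μ.2).choose
  have ht : t.map c = A.charpoly.roots := by
    rw [Multiset.map_map]
    conv_rhs => rw [← Multiset.attach_map_val A.charpoly.roots]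
    exact Multiset.map_congr rfl fun μ _ => (hA μ.1 μ.2).choose_spec
  refine ⟨t.count, ?_, ?_⟩
  · rw [Multiset.sum_count_eq_card fun i _ => Finset.mem_univ i, ← Multiset.card_map c, ht,
      splits_iff_card_roots.mp (IsAlgClosed.splits _), charpoly_natDegree_eq_dim]
  · rw [det_eq_prod_roots_charpoly, ← ht, Finset.prod_multiset_map_count]
    exact Finset.prod_subset (Finset.subset_univ _) fun i _ hi => by
      rw [Multiset.count_eq_zero_of_notMem (by simpa using hi), pow_zero]

theorem Matrix.exists_det_eq_prod_pow_of_aeval_eq_zero {n K ι : Type*} [Fintype n]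
    [DecidableEq n] [Nonempty n] [Field K] [IsAlgClosed K] [Fintype ι] (A : Matrix n n K)
    (c : ι → K) (hA : aeval A (∏ i, (X - C (c i))) = 0) :
    ∃ P : ι → ℕ, ∑ i, P i = Fintype.card n ∧ A.det = ∏ i, c i ^ P i := by
  refine A.exists_det_eq_prod_pow c fun μ hμ => ?_
  have := eval_eq_zero_of_isRoot_charpoly hA (isRoot_of_mem_roots hμ)
  obtain ⟨i, -, hi⟩ := Finset.prod_eq_zero_iff.mp (by simpa [eval_prod] using this)
  exact ⟨i, (sub_eq_zero.mp hi).symm⟩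

theorem stmt13_general (l N m : ℕ) (q : ℂ)
    (d : Fin m → ℕ) (u : (k : Fin m) → Fin (d k) → ℂ)
    (hgen : ∀ p : ℕ, 0 < p → p < l * N →
      ∀ P : (k : Fin m) → Fin (d k) → ℕ, (∀ k, ∑ j, P k j = p) →
        ∏ k, ∏ j, u k j ^ P k j ≠ q ^ p)
    (p : ℕ) (hp : 0 < p) (T : Fin m → Matrix (Fin p) (Fin p) ℂ)
    (hTk : ∀ k, (List.ofFn fun j : Fin (d k) =>
      T k - u k j • (1 : Matrix (Fin p) (Fin p) ℂ)).prod = 0)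
    (hprod : (List.ofFn T).prod = q • (1 : Matrix (Fin p) (Fin p) ℂ)) :
    l * N ≤ p := by
  by_contra! hlt
  have : Nonempty (Fin p) := ⟨⟨0, hp⟩⟩
  choose P hPsum hPdet using fun k => (T k).exists_det_eq_prod_pow_of_aeval_eq_zero (u k)
    (by rw [aeval_prod_X_sub_C_eq_prod_ofFn, hTk k])
  refine hgen p hp hlt P (by simpa using hPsum) ?_
  calc ∏ k, ∏ j, u k j ^ P k j = ∏ k, (T k).det := by simp only [hPdet]
    _ = (List.ofFn T).prod.det := by
      rw [← Matrix.coe_detMonoidHom, map_list_prod, List.map_ofFn, List.prod_ofFn]; rfl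
    _ = q ^ p := by simp [hprod]

/-- let `q` be a root of unity such that `q^l` has order `N`, and let the
parameters `u_{kj}` be such that one cannot choose nonnegative integers `p_{kj}` with
`∑_j p_{kj} = p < lN` for all `k` and `∏ u_{kj}^{p_{kj}} = q^p`.  Then every nonzero
finite-dimensional representation of `H(t,q)` — i.e. every tuple of `p × p` matrices
`T_k` with `∏_j (T_k - u_{kj}) = 0` and `T₁⋯T_m = q` — has dimension `p ≥ lN`. -/
theorem stmt13 (l N m : ℕ) (hl : 0 < l) (hN : 0 < N) (q : ℂ)
    (hqN : (q ^ l) ^ N = 1) (hord : ∀ k : ℕ, 0 < k → k < N → (q ^ l) ^ k ≠ 1)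
    (d : Fin m → ℕ) (u : (k : Fin m) → Fin (d k) → ℂ)
    (hgen : ∀ p : ℕ, 0 < p → p < l * N →
      ∀ P : (k : Fin m) → Fin (d k) → ℕ, (∀ k, ∑ j, P k j = p) →
        ∏ k, ∏ j, u k j ^ P k j ≠ q ^ p)
    (p : ℕ) (hp : 0 < p) (T : Fin m → Matrix (Fin p) (Fin p) ℂ)
    (hTk : ∀ k, (List.ofFn fun j : Fin (d k) =>
      T k - u k j • (1 : Matrix (Fin p) (Fin p) ℂ)).prod = 0)
    (hprod : (List.ofFn T).prod = q • (1 : Matrix (Fin p) (Fin p) ℂ)) :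
    l * N ≤ p :=
  stmt13_general l N m q d u hgen p hp T hTk hprod
end
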